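/- Write $x = (x',x'') \in \mathbf{R}^{n-m} \times \mathbf{R}^m$ with $1 \le m \le n-2$, let $p \in (n-m,\infty)$ with $p > 2$, set $\beta = (p-n+m)/(p-1)$, and let $0 < \gamma < \beta$. Then there exists $\delta_c \in (0,1)$, depending only on $n$, $\gamma$ and $p$, such that the function $\hat u(x) = |x'|^{\beta} + |x''|^2 |x'|^{\gamma} - \frac{1}{2}|x'|^2$ satisfies $\frac{\Delta \hat u\, |\nabla \hat u|^2}{p-2} + \Delta_\infty \hat u \le 0$ pointwise on the open set $\{x : |x''| < 1,\ 0 < |x'| < \delta_c\}$. -/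

import Mathlib

/-!
Write `a = |x'|²` and `b = |x''|²`, so that `û = g a + b * h a` with `g t = t ^ (β/2) - t/2` and
`h t = t ^ (γ/2)`. By the chain rule, `Δû |∇û|² + (p-2) Δ_∞ û` is a polynomial in `a`, `b` and
`A = g' a + b h' a`, `B = h a`, `S = g'' a + b h'' a`, `T = h' a`, equal to
`8 (a A² X + b B² Y + 4(p-2) a b A B T)` for two brackets `X`, `Y` linear in `A`, `a S`, `B`.
Put `P = a ^ (β/2-1)` and `Q = a ^ (γ/2-1)`, so that `A ≥ (β/4) P` for small `a` and `B = a Q`.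
Since `|x'|^β` is `p`-harmonic away from `x' = 0`, the `P`-terms of `X` cancel and
`X ≤ -(γ/2)(p-1)(β-γ) b Q` for small `a`; this gives a negative term of size `a b Q P²`. The other
two terms are `O(a² b Q³)`, and `a Q² / P² = a ^ (1+γ-β) → 0` because `γ < β`.
-/

open Real Filter Set

noncomputable def pd {n : ℕ} (f : EuclideanSpace ℝ (Fin n) → ℝ) (i : Fin n)
    (x : EuclideanSpace ℝ (Fin n)) : ℝ :=
  fderiv ℝ f x (EuclideanSpace.single i 1)

noncomputable def pd2 {n : ℕ} (f : EuclideanSpace ℝ (Fin n) → ℝ) (i j : Fin n)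
    (x : EuclideanSpace ℝ (Fin n)) : ℝ :=
  fderiv ℝ (fun y => pd f j y) x (EuclideanSpace.single i 1)

/-- The Laplacian `Δ f`. -/
noncomputable def lap {n : ℕ} (f : EuclideanSpace ℝ (Fin n) → ℝ)
    (x : EuclideanSpace ℝ (Fin n)) : ℝ := ∑ i, pd2 f i i x

/-- The infinity-Laplacian `Δ_∞ f = ∑ ∂i f ∂j f ∂i∂j f`. -/
noncomputable def ilap {n : ℕ} (f : EuclideanSpace ℝ (Fin n) → ℝ)
    (x : EuclideanSpace ℝ (Fin n)) : ℝ := ∑ i, ∑ j, pd f i x * pd f j x * pd2 f i j x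

/-- The norm of the gradient `|∇f|`. -/
noncomputable def gradNorm {n : ℕ} (f : EuclideanSpace ℝ (Fin n) → ℝ)
    (x : EuclideanSpace ℝ (Fin n)) : ℝ := Real.sqrt (∑ i, (pd f i x) ^ 2)

/-- `|x'|`: the norm of the first `n - m` coordinates of `x`. -/
noncomputable def normP (n m : ℕ) (x : EuclideanSpace ℝ (Fin n)) : ℝ :=
  Real.sqrt (∑ i : Fin n, if (i : ℕ) < n - m then (x i) ^ 2 else 0)

/-- `|x''|`: the norm of the last `m` coordinates of `x`. -/
noncomputable def normS (n m : ℕ) (x : EuclideanSpace ℝ (Fin n)) : ℝ :=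
  Real.sqrt (∑ i : Fin n, if (i : ℕ) < n - m then 0 else (x i) ^ 2)

open Topology

section SqNormOn

variable {n : ℕ} (s : Finset (Fin n)) (x : EuclideanSpace ℝ (Fin n))

noncomputable def sqNormOn : ℝ := ∑ i ∈ s, x i ^ 2

noncomputable def sqNormOnDeriv : EuclideanSpace ℝ (Fin n) →L[ℝ] ℝ :=
  ∑ i ∈ s, (2 * x i) • EuclideanSpace.proj i

lemma sqNormOn_nonneg : 0 ≤ sqNormOn s x :=
  Finset.sum_nonneg fun _ _ => sq_nonneg _

lemma sqNormOnDeriv_single (j : Fin n) :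
    sqNormOnDeriv s x (EuclideanSpace.single j 1) = if j ∈ s then 2 * x j else 0 := by
  simp [sqNormOnDeriv]

lemma hasFDerivAt_sqNormOn : HasFDerivAt (sqNormOn s) (sqNormOnDeriv s x) x := by
  refine HasFDerivAt.fun_sum fun i _ => ?_
  simpa using ((EuclideanSpace.proj (𝕜 := ℝ) i).hasFDerivAt (x := x)).pow 2

lemma continuous_sqNormOn : Continuous (sqNormOn s) :=
  continuous_finsetSum _ fun i _ => (EuclideanSpace.proj (𝕜 := ℝ) i).continuous.pow 2

lemma sum_sq_mul_ite (α β : ℝ) :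
    ∑ i, x i ^ 2 * (if i ∈ s then α else β) = sqNormOn s x * α + sqNormOn sᶜ x * β := by
  rw [sqNormOn, sqNormOn, Finset.sum_mul, Finset.sum_mul, ← Finset.sum_add_sum_compl s]
  congr 1 <;> refine Finset.sum_congr rfl fun i hi => ?_ <;> simp_all

end SqNormOn

section AffineProfile

variable {n : ℕ} (s : Finset (Fin n)) (g h : ℝ → ℝ)

noncomputable def affineProfile (x : EuclideanSpace ℝ (Fin n)) : ℝ :=
  g (sqNormOn s x) + sqNormOn sᶜ x * h (sqNormOn s x)

variable {s g h} {x : EuclideanSpace ℝ (Fin n)}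

lemma hasFDerivAt_comp_sqNormOn {h' : ℝ} (hh : HasDerivAt h h' (sqNormOn s x)) :
    HasFDerivAt (fun y => h (sqNormOn s y)) (h' • sqNormOnDeriv s x) x :=
  hh.comp_hasFDerivAt x (hasFDerivAt_sqNormOn s x)

lemma hasFDerivAt_affineProfile {g' h' : ℝ} (hg : HasDerivAt g g' (sqNormOn s x))
    (hh : HasDerivAt h h' (sqNormOn s x)) :
    HasFDerivAt (affineProfile s g h)
      ((g' + sqNormOn sᶜ x * h') • sqNormOnDeriv s x
        + h (sqNormOn s x) • sqNormOnDeriv sᶜ x) x := by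
  refine ((hasFDerivAt_comp_sqNormOn hg).add
    ((hasFDerivAt_sqNormOn sᶜ x).mul (hasFDerivAt_comp_sqNormOn hh))).congr_fderiv ?_
  ext v
  simp only [add_apply, FunLike.coe_smul, Pi.smul_apply, smul_eq_mul]
  ring

lemma pd_affineProfile {g' h' : ℝ} (hg : HasDerivAt g g' (sqNormOn s x))
    (hh : HasDerivAt h h' (sqNormOn s x)) (j : Fin n) :
    pd (affineProfile s g h) j x =
      2 * x j * if j ∈ s then g' + sqNormOn sᶜ x * h' else h (sqNormOn s x) := by
  rw [pd, (hasFDerivAt_affineProfile hg hh).fderiv]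
  by_cases hj : j ∈ s <;> simp [sqNormOnDeriv_single, hj] <;> ring

lemma pd_affineProfile_eventuallyEq {g' h' : ℝ → ℝ}
    (hg : ∀ᶠ t in 𝓝 (sqNormOn s x), HasDerivAt g (g' t) t)
    (hh : ∀ᶠ t in 𝓝 (sqNormOn s x), HasDerivAt h (h' t) t) (j : Fin n) :
    (fun y => pd (affineProfile s g h) j y) =ᶠ[𝓝 x]
      fun y => 2 * y j * if j ∈ s then affineProfile s g' h' y else h (sqNormOn s y) := by
  have hcont := (continuous_sqNormOn s).continuousAt (x := x)
  filter_upwards [hcont.eventually hg, hcont.eventually hh] with y hgy hhy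
  rw [pd_affineProfile hgy hhy, affineProfile]

lemma pd2_affineProfile {g' h' : ℝ → ℝ} {g'' h'' : ℝ}
    (hg : ∀ᶠ t in 𝓝 (sqNormOn s x), HasDerivAt g (g' t) t)
    (hh : ∀ᶠ t in 𝓝 (sqNormOn s x), HasDerivAt h (h' t) t)
    (hg' : HasDerivAt g' g'' (sqNormOn s x)) (hh' : HasDerivAt h' h'' (sqNormOn s x))
    (i j : Fin n) :
    pd2 (affineProfile s g h) i j x =
      (if i = j then 2 * if j ∈ s then g' (sqNormOn s x) + sqNormOn sᶜ x * h' (sqNormOn s x)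
          else h (sqNormOn s x) else 0) +
        4 * x i * x j *
          if i ∈ s then (if j ∈ s then g'' + sqNormOn sᶜ x * h'' else h' (sqNormOn s x))
          else (if j ∈ s then h' (sqNormOn s x) else 0) := by
  have hcoord : HasFDerivAt (fun y : EuclideanSpace ℝ (Fin n) => 2 * y j)
      ((2 : ℝ) • EuclideanSpace.proj j) x :=
    ((EuclideanSpace.proj (𝕜 := ℝ) j).hasFDerivAt (x := x)).const_mul 2
  rw [pd2, (pd_affineProfile_eventuallyEq hg hh j).fderiv_eq]
  by_cases hj : j ∈ s
  · simp only [hj, if_true]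
    rw [(hcoord.fun_mul (hasFDerivAt_affineProfile hg' hh')).fderiv]
    by_cases hi : i ∈ s <;> by_cases hij : i = j <;>
      simp [sqNormOnDeriv_single, affineProfile, hi, hj, hij] <;> ring
  · simp only [hj, if_false]
    rw [(hcoord.fun_mul (hasFDerivAt_comp_sqNormOn hh.self_of_nhds)).fderiv]
    by_cases hi : i ∈ s <;> by_cases hij : i = j <;>
      simp [sqNormOnDeriv_single, hi, hj, hij] <;> ring

end AffineProfile

section Operators

variable {n : ℕ} {s : Finset (Fin n)} {g h : ℝ → ℝ} {x : EuclideanSpace ℝ (Fin n)}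

lemma sum_ite_mem_univ (s : Finset (Fin n)) (α β : ℝ) :
    ∑ i, (if i ∈ s then α else β) = s.card * α + sᶜ.card * β := by
  rw [← Finset.sum_add_sum_compl s, Finset.sum_congr rfl fun i hi => if_pos hi,
    Finset.sum_congr rfl fun i hi => if_neg (Finset.mem_compl.1 hi)]
  simp

lemma gradNorm_sq_affineProfile {g' h' : ℝ} (hg : HasDerivAt g g' (sqNormOn s x))
    (hh : HasDerivAt h h' (sqNormOn s x)) :
    gradNorm (affineProfile s g h) x ^ 2 =
      4 * sqNormOn s x * (g' + sqNormOn sᶜ x * h') ^ 2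
        + 4 * sqNormOn sᶜ x * h (sqNormOn s x) ^ 2 := by
  have hterm : ∀ i, pd (affineProfile s g h) i x ^ 2 = x i ^ 2 *
      if i ∈ s then 4 * (g' + sqNormOn sᶜ x * h') ^ 2 else 4 * h (sqNormOn s x) ^ 2 := by
    intro i; rw [pd_affineProfile hg hh]; split_ifs <;> ring
  rw [gradNorm, Real.sq_sqrt (Finset.sum_nonneg fun _ _ => sq_nonneg _),
    Finset.sum_congr rfl fun i _ => hterm i, sum_sq_mul_ite]
  ring

variable {g' h' : ℝ → ℝ} {g'' h'' : ℝ}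

lemma lap_affineProfile
    (hg : ∀ᶠ t in 𝓝 (sqNormOn s x), HasDerivAt g (g' t) t)
    (hh : ∀ᶠ t in 𝓝 (sqNormOn s x), HasDerivAt h (h' t) t)
    (hg' : HasDerivAt g' g'' (sqNormOn s x)) (hh' : HasDerivAt h' h'' (sqNormOn s x)) :
    lap (affineProfile s g h) x =
      2 * s.card * (g' (sqNormOn s x) + sqNormOn sᶜ x * h' (sqNormOn s x))
        + 2 * sᶜ.card * h (sqNormOn s x) + 4 * sqNormOn s x * (g'' + sqNormOn sᶜ x * h'') := by
  have hterm : ∀ i, pd2 (affineProfile s g h) i i x =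
      (if i ∈ s then 2 * (g' (sqNormOn s x) + sqNormOn sᶜ x * h' (sqNormOn s x))
        else 2 * h (sqNormOn s x))
      + x i ^ 2 * if i ∈ s then 4 * (g'' + sqNormOn sᶜ x * h'') else 0 := by
    intro i; rw [pd2_affineProfile hg hh hg' hh', if_pos rfl]; split_ifs <;> ring
  rw [lap, Finset.sum_congr rfl fun i _ => hterm i, Finset.sum_add_distrib, sum_ite_mem_univ,
    sum_sq_mul_ite]
  ring

lemma ilap_affineProfile
    (hg : ∀ᶠ t in 𝓝 (sqNormOn s x), HasDerivAt g (g' t) t)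
    (hh : ∀ᶠ t in 𝓝 (sqNormOn s x), HasDerivAt h (h' t) t)
    (hg' : HasDerivAt g' g'' (sqNormOn s x)) (hh' : HasDerivAt h' h'' (sqNormOn s x)) :
    ilap (affineProfile s g h) x =
      8 * sqNormOn s x * (g' (sqNormOn s x) + sqNormOn sᶜ x * h' (sqNormOn s x)) ^ 3
        + 8 * sqNormOn sᶜ x * h (sqNormOn s x) ^ 3
        + 16 * sqNormOn s x ^ 2 * (g' (sqNormOn s x) + sqNormOn sᶜ x * h' (sqNormOn s x)) ^ 2
            * (g'' + sqNormOn sᶜ x * h'')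
        + 32 * sqNormOn s x * sqNormOn sᶜ x
            * (g' (sqNormOn s x) + sqNormOn sᶜ x * h' (sqNormOn s x))
            * h (sqNormOn s x) * h' (sqNormOn s x) := by
  set a := sqNormOn s x
  set b := sqNormOn sᶜ x
  set A := g' a + b * h' a
  set B := h a
  set S := g'' + b * h''
  set T := h' a
  have hrow : ∀ i, ∑ j, pd (affineProfile s g h) i x * pd (affineProfile s g h) j x
      * pd2 (affineProfile s g h) i j x = x i ^ 2 *
        if i ∈ s then 8 * A ^ 3 + 16 * A * (a * A * S + b * B * T)
        else 8 * B ^ 3 + 16 * B * (a * A * T) := by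
    intro i
    have hterm : ∀ j, pd (affineProfile s g h) i x * pd (affineProfile s g h) j x
        * pd2 (affineProfile s g h) i j x =
          (if i = j then x i ^ 2 * (if i ∈ s then 8 * A ^ 3 else 8 * B ^ 3) else 0)
          + x j ^ 2 * if j ∈ s then 16 * x i ^ 2 * (if i ∈ s then A * A * S else B * A * T)
              else 16 * x i ^ 2 * (if i ∈ s then A * B * T else 0) := by
      intro j
      rw [pd_affineProfile hg.self_of_nhds hh.self_of_nhds,
        pd_affineProfile hg.self_of_nhds hh.self_of_nhds, pd2_affineProfile hg hh hg' hh']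
      by_cases hij : i = j
      · subst hij; split_ifs <;> ring
      · split_ifs <;> ring
    rw [Finset.sum_congr rfl fun j _ => hterm j, Finset.sum_add_distrib, Finset.sum_ite_eq,
      if_pos (Finset.mem_univ i), sum_sq_mul_ite]
    split_ifs <;> ring
  rw [ilap, Finset.sum_congr rfl fun i _ => hrow i, sum_sq_mul_ite]
  ring

/-- `Δu |∇u|² + (p-2) Δ_∞ u` for `u x = F (|x_s|², |x_sᶜ|²)` with `∂₂² F = 0`, in terms of
`k = #s`, `m = #sᶜ`, `a = |x_s|²`, `b = |x_sᶜ|²`, `A = ∂₁F`, `B = ∂₂F`, `S = ∂₁²F`, `T = ∂₁∂₂F`. -/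
noncomputable def pLapForm (k m p a b A B S T : ℝ) : ℝ :=
  (2 * k * A + 2 * m * B + 4 * a * S) * (4 * a * A ^ 2 + 4 * b * B ^ 2)
    + (p - 2) * (8 * a * A ^ 3 + 8 * b * B ^ 3 + 16 * a ^ 2 * A ^ 2 * S + 32 * a * b * A * B * T)

lemma lap_mul_gradNorm_sq_add_ilap_affineProfile (p : ℝ)
    (hg : ∀ᶠ t in 𝓝 (sqNormOn s x), HasDerivAt g (g' t) t)
    (hh : ∀ᶠ t in 𝓝 (sqNormOn s x), HasDerivAt h (h' t) t)
    (hg' : HasDerivAt g' g'' (sqNormOn s x)) (hh' : HasDerivAt h' h'' (sqNormOn s x)) :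
    lap (affineProfile s g h) x * gradNorm (affineProfile s g h) x ^ 2
        + (p - 2) * ilap (affineProfile s g h) x =
      pLapForm s.card sᶜ.card p (sqNormOn s x) (sqNormOn sᶜ x)
        (g' (sqNormOn s x) + sqNormOn sᶜ x * h' (sqNormOn s x)) (h (sqNormOn s x))
        (g'' + sqNormOn sᶜ x * h'') (h' (sqNormOn s x)) := by
  rw [lap_affineProfile hg hh hg' hh', gradNorm_sq_affineProfile hg.self_of_nhds hh.self_of_nhds,
    ilap_affineProfile hg hh hg' hh', pLapForm]

end Operators

lemma pLapForm_eq (k m p a b A B S T : ℝ) :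
    pLapForm k m p a b A B S T =
      8 * (a * A ^ 2 * ((k + p - 2) * A + 2 * (p - 1) * (a * S) + m * B)
        + b * B ^ 2 * (k * A + 2 * (a * S) + (m + p - 2) * B)
        + 4 * (p - 2) * (a * b * A * B * T)) := by
  unfold pLapForm; ring

lemma pLapForm_nonpos_of_bounds {k m p a b A B S T Q c C₂ C₃ : ℝ} (ha : 0 ≤ a) (hb : 0 ≤ b)
    (hQ : 0 ≤ Q) (hB : B = a * Q)
    (h₁ : (k + p - 2) * A + 2 * (p - 1) * (a * S) + m * B ≤ -(c * b * Q))
    (h₂ : k * A + 2 * (a * S) + (m + p - 2) * B ≤ C₂ * Q)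
    (h₃ : 4 * (p - 2) * (a * b * A * B * T) ≤ C₃ * (a ^ 2 * b * Q ^ 3))
    (hc : (C₂ + C₃) * (a * Q ^ 2) ≤ c * A ^ 2) :
    pLapForm k m p a b A B S T ≤ 0 := by
  have t₁ := mul_le_mul_of_nonneg_left h₁ (by positivity : 0 ≤ a * A ^ 2)
  have t₂ := mul_le_mul_of_nonneg_left h₂ (by positivity : 0 ≤ b * B ^ 2)
  have t₃ := mul_le_mul_of_nonneg_left hc (by positivity : 0 ≤ a * b * Q)
  have hB₂ : b * B ^ 2 * (C₂ * Q) = C₂ * (a ^ 2 * b * Q ^ 3) := by rw [hB]; ring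
  rw [pLapForm_eq]
  linarith

lemma half_mul_add_sub_two_mem_Icc {k e : ℝ} (hk : 2 ≤ k) (he₀ : 0 < e) (he₁ : e < 1) :
    e / 2 * (k + e - 2) ∈ Icc 0 (k / 2) := by
  constructor <;> nlinarith

lemma pLapForm_nonpos {k m p β γ a b P Q A B S T : ℝ} (hk : 2 ≤ k) (hm : 0 ≤ m) (hp : 2 < p)
    (hβ : (p - 1) * β = p - k) (hγ : 0 < γ) (hγβ : γ < β)
    (ha : 0 < a) (ha₁ : a ≤ 1) (hb : 0 ≤ b) (hb₁ : b ≤ 1) (hP : 0 < P) (hPQ : P ≤ Q)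
    (hA : A = β / 2 * P - 1 / 2 + b * (γ / 2 * Q)) (hB : B = a * Q)
    (hS : a * S = β / 2 * (β / 2 - 1) * P + b * (γ / 2 * (γ / 2 - 1) * Q)) (hT : T = γ / 2 * Q)
    (hsmall₁ : 2 * m * (a * Q) ≤ k + p - 2) (hsmall₂ : 2 ≤ β * P)
    (hsmall₃ : 16 * (k + m + p + (p - 2) * γ * (β + γ)) * (a * Q ^ 2)
      ≤ γ / 2 * (p - 1) * (β - γ) * β ^ 2 * P ^ 2) :
    pLapForm k m p a b A B S T ≤ 0 := by
  have hβ₁ : β < 1 := by nlinarith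
  have hQ : 0 < Q := hP.trans_le hPQ
  have hA_le : A ≤ (β + γ) / 2 * Q := by
    nlinarith [mul_le_mul_of_nonneg_left hPQ (hγ.trans hγβ).le,
      mul_le_mul_of_nonneg_right hb₁ (mul_nonneg hγ.le hQ.le)]
  have hA_sq : β ^ 2 * P ^ 2 ≤ 16 * A ^ 2 := by nlinarith [mul_nonneg hb (mul_nonneg hγ.le hQ.le)]
  refine pLapForm_nonpos_of_bounds (c := γ / 2 * (p - 1) * (β - γ)) (C₂ := k + m + p)
    (C₃ := (p - 2) * γ * (β + γ)) ha.le hb hQ.le hB ?_ ?_ ?_ ?_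
  · -- the choice of `β` cancels the `P`-terms
    have : (k + p - 2) * A + 2 * (p - 1) * (a * S) + m * B
        = -(γ / 2 * (p - 1) * (β - γ) * b * Q) - (k + p - 2) / 2 + m * (a * Q) := by
      rw [hS, hA, hB]; linear_combination (β / 2 * P + γ / 2 * b * Q) * hβ
    linarith
  · obtain ⟨hβc₀, hβc₁⟩ := half_mul_add_sub_two_mem_Icc hk (hγ.trans hγβ) hβ₁
    obtain ⟨hγc₀, hγc₁⟩ := half_mul_add_sub_two_mem_Icc hk hγ (hγβ.trans hβ₁)
    have hβP : β / 2 * (k + β - 2) * P ≤ k / 2 * Q :=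
      (mul_le_mul_of_nonneg_left hPQ hβc₀).trans (mul_le_mul_of_nonneg_right hβc₁ hQ.le)
    have hγQ : b * (γ / 2 * (k + γ - 2)) * Q ≤ k / 2 * Q :=
      mul_le_mul_of_nonneg_right ((mul_le_of_le_one_left hγc₀ hb₁).trans hγc₁) hQ.le
    have haQ : (m + p - 2) * (a * Q) ≤ (m + p) * Q := by
      have : a * Q ≤ Q := mul_le_of_le_one_left hQ.le ha₁
      nlinarith
    have : k * A + 2 * (a * S) + (m + p - 2) * B = β / 2 * (k + β - 2) * P
        + b * (γ / 2 * (k + γ - 2)) * Q - k / 2 + (m + p - 2) * (a * Q) := by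
      rw [hS, hA, hB]; ring
    linarith
  · calc 4 * (p - 2) * (a * b * A * B * T) = 2 * (p - 2) * γ * (a ^ 2 * b * Q ^ 2) * A := by
          rw [hB, hT]; ring
      _ ≤ 2 * (p - 2) * γ * (a ^ 2 * b * Q ^ 2) * ((β + γ) / 2 * Q) := by
          gcongr
      _ = (p - 2) * γ * (β + γ) * (a ^ 2 * b * Q ^ 3) := by ring
  · have hc₀ : 0 ≤ γ / 2 * (p - 1) * (β - γ) :=
      mul_nonneg (mul_nonneg (by linarith) (by linarith)) (by linarith)
    linarith [mul_le_mul_of_nonneg_left hA_sq hc₀]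

lemma eventually_mul_rpow_le (C : ℝ) {e c : ℝ} (he : 0 < e) (hc : 0 < c) :
    ∀ᶠ a in 𝓝[>] 0, C * a ^ e ≤ c := by
  have h := ((Real.continuousAt_rpow_const 0 e (Or.inr he.le)).tendsto).const_mul C
  rw [Real.zero_rpow he.ne', mul_zero] at h
  exact nhdsWithin_le_nhds (h.eventually (eventually_le_nhds hc))

lemma eventually_pLapForm_rpow_nonpos {k m p β γ : ℝ} (hk : 2 ≤ k) (hm : 0 ≤ m) (hp : 2 < p)
    (hβ : (p - 1) * β = p - k) (hγ : 0 < γ) (hγβ : γ < β) :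
    ∀ᶠ a in 𝓝[>] 0, ∀ b, 0 ≤ b → b < 1 →
      pLapForm k m p a b (β / 2 * a ^ (β / 2 - 1) - 1 / 2 + b * (γ / 2 * a ^ (γ / 2 - 1)))
        (a ^ (γ / 2))
        (β / 2 * ((β / 2 - 1) * a ^ (β / 2 - 1 - 1))
          + b * (γ / 2 * ((γ / 2 - 1) * a ^ (γ / 2 - 1 - 1))))
        (γ / 2 * a ^ (γ / 2 - 1)) ≤ 0 := by
  have hβ₁ : β < 1 := by nlinarith
  have hc : 0 < γ / 2 * (p - 1) * (β - γ) * β ^ 2 := by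
    have : 0 < β := hγ.trans hγβ
    have : 0 < β - γ := sub_pos.2 hγβ
    have : 0 < p - 1 := by linarith
    positivity
  filter_upwards [Ioo_mem_nhdsGT zero_lt_one,
    eventually_mul_rpow_le (2 * m) (half_pos hγ) (by linarith : 0 < k + p - 2),
    eventually_mul_rpow_le 1 (by linarith : 0 < 1 - β / 2) (half_pos (hγ.trans hγβ)),
    eventually_mul_rpow_le (16 * (k + m + p + (p - 2) * γ * (β + γ)))
      (by linarith : 0 < 1 + γ - β) hc]
    with a ⟨ha₀, ha₁⟩ h₁ h₂ h₃ b hb₀ hb₁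
  have hmul : ∀ e : ℝ, a * a ^ (e - 1) = a ^ e := fun e => by
    rw [Real.rpow_sub_one ha₀.ne', mul_div_cancel₀ _ ha₀.ne']
  have hP : 0 < a ^ (β / 2 - 1) := Real.rpow_pos_of_pos ha₀ _
  have hPβ : a ^ (1 - β / 2) * a ^ (β / 2 - 1) = 1 := by
    rw [← Real.rpow_add ha₀, show 1 - β / 2 + (β / 2 - 1) = 0 by ring, Real.rpow_zero]
  have hPQ : a * (a ^ (γ / 2 - 1)) ^ 2 = a ^ (1 + γ - β) * (a ^ (β / 2 - 1)) ^ 2 := by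
    nth_rewrite 1 [← Real.rpow_one a]
    simp only [sq, ← Real.rpow_add ha₀]
    ring_nf
  refine pLapForm_nonpos hk hm hp hβ hγ hγβ ha₀ ha₁.le hb₀ hb₁.le hP
    (Real.rpow_le_rpow_of_exponent_ge ha₀ ha₁.le (by linarith)) rfl (hmul (γ / 2)).symm ?_ rfl
    (by rw [hmul]; exact h₁) ?_ ?_
  · linear_combination (β / 2 * (β / 2 - 1)) * hmul (β / 2 - 1)
      + (b * (γ / 2 * (γ / 2 - 1))) * hmul (γ / 2 - 1)
  · nlinarith [mul_le_mul_of_nonneg_right h₂ hP.le, hPβ]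
  · rw [hPQ]
    nlinarith [mul_le_mul_of_nonneg_right h₃ (sq_nonneg (a ^ (β / 2 - 1)))]

lemma exists_forall_lt_sq_of_eventually {P : ℝ → Prop} (h : ∀ᶠ a in 𝓝[>] 0, P a) :
    ∃ δ, 0 < δ ∧ δ < 1 ∧ ∀ a, 0 < a → a < δ ^ 2 → P a := by
  obtain ⟨ε, hε, hP⟩ := mem_nhdsGT_iff_exists_Ioo_subset.1 h
  refine ⟨min (1 / 2) √ε, lt_min one_half_pos (Real.sqrt_pos.2 hε),
    (min_le_left _ _).trans_lt one_half_lt_one, fun a ha haδ => hP ⟨ha, haδ.trans_le ?_⟩⟩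
  calc min (1 / 2) √ε ^ 2 ≤ √ε ^ 2 :=
        pow_le_pow_left₀ (le_min one_half_pos.le (Real.sqrt_nonneg _)) (min_le_right _ _) 2
    _ = ε := Real.sq_sqrt hε.le

lemma eventually_hasDerivAt_rpow (e : ℝ) {a : ℝ} (ha : 0 < a) :
    ∀ᶠ t in 𝓝 a, HasDerivAt (fun t => t ^ e) (e * t ^ (e - 1)) t := by
  filter_upwards [Ioi_mem_nhds ha] with t ht using Real.hasDerivAt_rpow_const (Or.inl ht.ne')

lemma lap_mul_gradNorm_sq_add_ilap_rpowProfile {n : ℕ} {s : Finset (Fin n)}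
    {x : EuclideanSpace ℝ (Fin n)} (p β γ : ℝ) (ha : 0 < sqNormOn s x) :
    let u := affineProfile s (fun t => t ^ (β / 2) - 1 / 2 * t) fun t => t ^ (γ / 2)
    lap u x * gradNorm u x ^ 2 + (p - 2) * ilap u x =
      pLapForm s.card sᶜ.card p (sqNormOn s x) (sqNormOn sᶜ x)
        (β / 2 * sqNormOn s x ^ (β / 2 - 1) - 1 / 2
          + sqNormOn sᶜ x * (γ / 2 * sqNormOn s x ^ (γ / 2 - 1)))
        (sqNormOn s x ^ (γ / 2))
        (β / 2 * ((β / 2 - 1) * sqNormOn s x ^ (β / 2 - 1 - 1))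
          + sqNormOn sᶜ x * (γ / 2 * ((γ / 2 - 1) * sqNormOn s x ^ (γ / 2 - 1 - 1))))
        (γ / 2 * sqNormOn s x ^ (γ / 2 - 1)) :=
  lap_mul_gradNorm_sq_add_ilap_affineProfile p
    ((eventually_hasDerivAt_rpow (β / 2) ha).mono fun t ht =>
      (ht.sub ((hasDerivAt_id t).const_mul (1 / 2))).congr_deriv (by ring))
    (eventually_hasDerivAt_rpow (γ / 2) ha)
    (((Real.hasDerivAt_rpow_const (Or.inl ha.ne')).const_mul (β / 2)).sub_const (1 / 2))
    ((Real.hasDerivAt_rpow_const (Or.inl ha.ne')).const_mul (γ / 2))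

def firstCoords (n k : ℕ) : Finset (Fin n) := Finset.univ.filter fun i => (i : ℕ) < k

lemma card_firstCoords {n k : ℕ} (hk : k ≤ n) : (firstCoords n k).card = k := by
  rw [firstCoords, Fin.card_filter_val_lt]; omega

section Coordinates

variable {n : ℕ} (m : ℕ)

lemma normP_eq_sqrt (x : EuclideanSpace ℝ (Fin n)) :
    normP n m x = √(sqNormOn (firstCoords n (n - m)) x) := by
  rw [normP, sqNormOn, firstCoords, Finset.sum_filter]

lemma normS_eq_sqrt (x : EuclideanSpace ℝ (Fin n)) :
    normS n m x = √(sqNormOn (firstCoords n (n - m))ᶜ x) := by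
  rw [normS, sqNormOn, firstCoords, Finset.compl_filter, Finset.sum_filter]
  simp only [ite_not]

lemma affineProfile_firstCoords_rpow (β γ : ℝ) (x : EuclideanSpace ℝ (Fin n)) :
    affineProfile (firstCoords n (n - m)) (fun t => t ^ (β / 2) - 1 / 2 * t)
        (fun t => t ^ (γ / 2)) x =
      normP n m x ^ β + normS n m x ^ 2 * normP n m x ^ γ - 1 / 2 * normP n m x ^ 2 := by
  rw [affineProfile, normP_eq_sqrt, normS_eq_sqrt,
    ← Real.rpow_div_two_eq_sqrt _ (sqNormOn_nonneg _ _),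
    ← Real.rpow_div_two_eq_sqrt _ (sqNormOn_nonneg _ _), Real.sq_sqrt (sqNormOn_nonneg _ _),
    Real.sq_sqrt (sqNormOn_nonneg _ _)]
  ring

end Coordinates

theorem statement7_general (n m : ℕ) (hm2 : m ≤ n - 2) (hn : 2 ≤ n)
    (p : ℝ) (hp2 : 2 < p)
    (β γ : ℝ) (hβ : β = (p - n + m) / (p - 1)) (hγ0 : 0 < γ) (hγβ : γ < β)
    (u : EuclideanSpace ℝ (Fin n) → ℝ)
    (hu : ∀ x, u x = normP n m x ^ β + (normS n m x) ^ 2 * normP n m x ^ γ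
        - (1 / 2) * (normP n m x) ^ 2) :
    ∃ δc : ℝ, 0 < δc ∧ δc < 1 ∧
      ∀ x : EuclideanSpace ℝ (Fin n), normS n m x < 1 → 0 < normP n m x → normP n m x < δc →
        lap u x * gradNorm u x ^ 2 / (p - 2) + ilap u x ≤ 0 := by
  have hu' : u = _ := funext fun x => (hu x).trans (affineProfile_firstCoords_rpow m β γ x).symm
  subst hu'
  have hs : (firstCoords n (n - m)).card = n - m := card_firstCoords (by omega)
  have hk : (2 : ℝ) ≤ (firstCoords n (n - m)).card := by
    rw [hs]; exact_mod_cast (by omega : 2 ≤ n - m)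
  have hβ' : (p - 1) * β = p - (firstCoords n (n - m)).card := by
    rw [hβ, mul_div_cancel₀ _ (by linarith), hs, Nat.cast_sub (by omega)]; ring
  obtain ⟨δ, hδ₀, hδ₁, hδ⟩ := exists_forall_lt_sq_of_eventually
    (eventually_pLapForm_rpow_nonpos hk (Nat.cast_nonneg _) hp2 hβ' hγ0 hγβ)
  refine ⟨δ, hδ₀, hδ₁, fun x hS hP₀ hPδ => ?_⟩
  rw [normP_eq_sqrt, Real.sqrt_pos] at hP₀
  rw [normP_eq_sqrt, Real.sqrt_lt' hδ₀] at hPδ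
  rw [normS_eq_sqrt, Real.sqrt_lt' one_pos, one_pow] at hS
  have hp₂ : 0 < p - 2 := by linarith
  rw [div_add' _ _ _ hp₂.ne', mul_comm (ilap _ x),
    lap_mul_gradNorm_sq_add_ilap_rpowProfile p β γ hP₀]
  exact div_nonpos_of_nonpos_of_nonneg (hδ _ hP₀ hPδ _ (sqNormOn_nonneg _ _) hS) hp₂.le

/-- existence of `δ_c ∈ (0,1)` such that
`û = |x'|^β + |x''|²|x'|^γ - |x'|²/2` satisfies `Δû |∇û|²/(p-2) + Δ_∞ û ≤ 0`
on `{x : |x''| < 1, 0 < |x'| < δ_c}`. -/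
theorem statement7 (n m : ℕ) (hm1 : 1 ≤ m) (hm2 : m ≤ n - 2) (hn : 2 ≤ n)
    (p : ℝ) (hp : (n : ℝ) - m < p) (hp2 : 2 < p)
    (β γ : ℝ) (hβ : β = (p - n + m) / (p - 1)) (hγ0 : 0 < γ) (hγβ : γ < β)
    (u : EuclideanSpace ℝ (Fin n) → ℝ)
    (hu : ∀ x, u x = normP n m x ^ β + (normS n m x) ^ 2 * normP n m x ^ γ
        - (1 / 2) * (normP n m x) ^ 2) :
    ∃ δc : ℝ, 0 < δc ∧ δc < 1 ∧
      ∀ x : EuclideanSpace ℝ (Fin n), normS n m x < 1 → 0 < normP n m x → normP n m x < δc →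
        lap u x * gradNorm u x ^ 2 / (p - 2) + ilap u x ≤ 0 :=
  statement7_general n m hm2 hn p hp2 β γ hβ hγ0 hγβ u hu
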